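/- Let μ = {μ_t}_{t>0} be a factorizing family over [0,1]×L. For 0 ≤ s < t ≤ 1 define the restriction–translate map R_{s,t} : 𝒞_1 → 𝒞_{t−s} by R_{s,t}(Z) = (Z ∩ ([s,t]×L)) − (s,0), where −(s,0) shifts the time coordinate by s. Then the pushforward measure (R_{s,t})_*μ_1 and the measure μ_{t−s} are mutually absolutely continuous. -/

import Mathlib

open MeasureTheory Set
open scoped ENNReal NNReal

namespace RandomSets

variable (L : Type) [TopologicalSpace L]

/-- The time strip `[0,t] × L` inside `ℝ × L`. -/
def strip (t : ℝ) : Set (ℝ × L) := Set.Icc (0:ℝ) t ×ˢ (Set.univ : Set L)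

lemma isClosed_strip (t : ℝ) : IsClosed (strip L t) :=
  isClosed_Icc.prod isClosed_univ

/-- Closed subsets of `[0,t] × L`. -/
def Cl (t : ℝ) : Type := {F : Set (ℝ × L) // IsClosed F ∧ F ⊆ strip L t}

variable {L}

lemma isClosed_fstImage (f g : ℝ → ℝ) (hg : Continuous g)
    (hgf : ∀ x, g (f x) = x) (hfg : ∀ x, f (g x) = x)
    {A : Set (ℝ × L)} (hA : IsClosed A) :
    IsClosed ((fun p : ℝ × L => (f p.1, p.2)) '' A) := by
  have h : (fun p : ℝ × L => (f p.1, p.2)) '' A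
      = (fun p : ℝ × L => (g p.1, p.2)) ⁻¹' A := by
    ext p
    constructor
    · rintro ⟨q, hq, rfl⟩
      simpa [hgf] using hq
    · intro hp
      exact ⟨(g p.1, p.2), hp, by simp [hfg]⟩
  rw [h]
  exact hA.preimage (by fun_prop)

variable (L)

/-- The Fell topology on `Cl L t`. -/
def fellTop (t : ℝ) : TopologicalSpace (Cl L t) :=
  TopologicalSpace.generateFrom
    ({S | ∃ U : Set (ℝ × L), IsOpen U ∧
        S = {F : Cl L t | (F.1 ∩ (U ∩ strip L t)).Nonempty}} ∪
     {S | ∃ K : Set (ℝ × L), IsCompact K ∧ K ⊆ strip L t ∧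
        S = {F : Cl L t | F.1 ∩ K = ∅}})

instance (t : ℝ) : TopologicalSpace (Cl L t) := fellTop L t

/-- `Σ_t`, the Borel σ-field of the Fell topology. -/
instance (t : ℝ) : MeasurableSpace (Cl L t) := borel (Cl L t)

variable {L}

/-- Concatenation: `Z₁ ⊕_{s,t} Z₂ = Z₁ ∪ (s + Z₂)` as a closed subset of `[0,s+t] × L`. -/
noncomputable def concat (s t : ℝ) (Z₁ : Cl L s) (Z₂ : Cl L t) : Cl L (s + t) :=
  ⟨(Z₁.1 ∪ (fun p : ℝ × L => (p.1 + s, p.2)) '' Z₂.1) ∩ strip L (s + t), by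
    refine ⟨IsClosed.inter ?_ (isClosed_strip L _), Set.inter_subset_right⟩
    exact Z₁.2.1.union (isClosed_fstImage (· + s) (· - s) (by fun_prop)
      (fun x => by ring) (fun x => by ring) Z₂.2.1)⟩

/-- Concatenation as a map on pairs. -/
noncomputable def concatMap (s t : ℝ) : Cl L s × Cl L t → Cl L (s + t) :=
  fun p => concat s t p.1 p.2

/-- A factorizing family of probability measures over `[0,1] × L` (Definition 2.2 (i)–(ii)). -/
def IsFactorizing (μ : (t : ℝ) → Measure (Cl L t)) : Prop :=
  (∀ t : ℝ, 0 < t → IsProbabilityMeasure (μ t)) ∧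
  (∀ s t : ℝ, 0 < s → 0 < t →
    μ (s + t) ≪ Measure.map (concatMap s t) ((μ s).prod (μ t)) ∧
    Measure.map (concatMap s t) ((μ s).prod (μ t)) ≪ μ (s + t)) ∧
  (∀ t : ℝ, 0 < t → ∀ r ∈ Set.Icc (0:ℝ) t,
    μ t {Z : Cl L t | ∃ ℓ : L, (r, ℓ) ∈ Z.1} = 0)

/-- The restriction–translate map `R_{s,t} : 𝒞_1 → 𝒞_{t-s}`,
`Z ↦ (Z ∩ ([s,t] × L)) - (s,0)`. -/
noncomputable def restrictTranslate (s t : ℝ) (Z : Cl L 1) : Cl L (t - s) :=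
  ⟨(fun p : ℝ × L => (p.1 - s, p.2)) '' (Z.1 ∩ (Set.Icc s t ×ˢ (Set.univ : Set L))), by
    constructor
    · exact isClosed_fstImage (· - s) (· + s) (by fun_prop)
        (fun x => by ring) (fun x => by ring)
        (Z.2.1.inter (isClosed_Icc.prod isClosed_univ))
    · rintro p ⟨q, ⟨-, hq⟩, rfl⟩
      simp only [Set.mem_prod, Set.mem_Icc, Set.mem_univ, and_true] at hq
      simp only [strip, Set.mem_prod, Set.mem_Icc, Set.mem_univ, and_true]
      constructor <;> linarith [hq.1, hq.2]⟩

/-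
Split `[0, a + b]` at time `a`. By factorization, `μ (a + b)` is equivalent to the law of
`Z₁ ⊕ Z₂` with `Z₁ ~ μ a`, `Z₂ ~ μ b` independent, and since no `μ` charges a fixed time slice,
a window of `Z₁ ⊕ Z₂` inside `[0, a]` (resp. `[a, a + b]`) is a.s. the corresponding window of
`Z₁` (resp. `Z₂`). Pushing forward along measurable maps preserves mutual absolute continuity,
so cutting off `[t, 1]` and then `[0, s]` turns `(R_{s,t})_* μ 1` into `μ (t - s)`.
Windows are measurable because the Fell topology is second countable, so that `Σ_t` is
generated by the hit and miss sets.
-/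

end RandomSets

theorem exists_countable_isCompact_between (X : Type*) [TopologicalSpace X] [T2Space X]
    [LocallyCompactSpace X] [SecondCountableTopology X] :
    ∃ 𝒦 : Set (Set X), 𝒦.Countable ∧ (∀ K ∈ 𝒦, IsCompact K) ∧
      ∀ K U, IsCompact K → IsOpen U → K ⊆ U → ∃ K' ∈ 𝒦, K ⊆ K' ∧ K' ⊆ U := by
  open TopologicalSpace in
  refine ⟨(fun I => closure (⋃ b ∈ I, b)) '' {I | I.Finite ∧ I ⊆ countableBasis X} ∩
      {K | IsCompact K}, ?_, fun K hK => hK.2, ?_⟩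
  · exact ((countable_ofPred_finite_subset (countable_countableBasis X)).image _).mono
      inter_subset_left
  · intro K U hK hU hKU
    obtain ⟨C, hC, hKC, hCU⟩ := exists_compact_between hK hU hKU
    have hcover : K ⊆ ⋃ b ∈ {b ∈ countableBasis X | b ⊆ interior C}, b := by
      rw [← sUnion_eq_biUnion, ← (isBasis_countableBasis X).open_eq_sUnion' isOpen_interior]
      exact hKC
    obtain ⟨I, hI, hIfin, hKI⟩ :=
      hK.elim_finite_subcover_image (fun b hb => isOpen_of_mem_countableBasis hb.1) hcover
    have hIC : closure (⋃ b ∈ I, b) ⊆ C :=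
      closure_minimal (iUnion₂_subset fun b hb => (hI hb).2.trans interior_subset) hC.isClosed
    exact ⟨_, ⟨⟨I, ⟨hIfin, fun b hb => (hI hb).1⟩, rfl⟩,
      hC.of_isClosed_subset isClosed_closure hIC⟩, hKI.trans subset_closure, hIC.trans hCU⟩

theorem TopologicalSpace.generateFrom_eq_generateFrom_of_subset {α : Type*}
    {S T : Set (Set α)} (hTS : T ⊆ S) (hS : ∀ s ∈ S, ∀ x ∈ s, ∃ u ∈ T, x ∈ u ∧ u ⊆ s) :
    generateFrom S = generateFrom T := by
  refine le_antisymm (generateFrom_anti hTS) (le_generateFrom fun s hs => ?_)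
  let _ : TopologicalSpace α := generateFrom T
  exact isOpen_iff_forall_mem_open.2 fun x hx =>
    let ⟨u, huT, hxu, hus⟩ := hS s hs x hx
    ⟨u, hus, isOpen_generateFrom_of_mem huT, hxu⟩

namespace RandomSets

variable {L : Type} {t : ℝ}

theorem mem_strip {p : ℝ × L} : p ∈ strip L t ↔ 0 ≤ p.1 ∧ p.1 ≤ t := by
  simp [strip]

theorem image_shift_eq_preimage (c : ℝ) :
    image (fun p : ℝ × L => (p.1 - c, p.2)) = preimage (fun p => (p.1 + c, p.2)) :=
  image_eq_preimage_of_inverse (fun p => by simp) (fun p => by simp)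

variable [TopologicalSpace L]

section FellTopology

def hitSet (t : ℝ) (A : Set (ℝ × L)) : Set (Cl L t) := {F | (F.1 ∩ A).Nonempty}

def missSet (t : ℝ) (A : Set (ℝ × L)) : Set (Cl L t) := {F | F.1 ∩ A = ∅}

variable (L) in
def fellSubbasis (t : ℝ) : Set (Set (Cl L t)) :=
  {S | ∃ U, IsOpen U ∧ S = hitSet t (U ∩ strip L t)} ∪
    {S | ∃ K, IsCompact K ∧ K ⊆ strip L t ∧ S = missSet t K}

theorem fellTop_eq_generateFrom (t : ℝ) :
    fellTop L t = TopologicalSpace.generateFrom (fellSubbasis L t) := rfl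

instance (t : ℝ) : BorelSpace (Cl L t) := ⟨rfl⟩

theorem Cl.inter_strip (F : Cl L t) (A : Set (ℝ × L)) : F.1 ∩ (A ∩ strip L t) = F.1 ∩ A := by
  rw [inter_comm A, ← inter_assoc, inter_eq_left.2 F.2.2]

theorem missSet_inter_strip (A : Set (ℝ × L)) : missSet t (A ∩ strip L t) = missSet t A := by
  simp only [missSet, Cl.inter_strip]

theorem hitSet_mono {A B : Set (ℝ × L)} (h : A ⊆ B) : hitSet t A ⊆ hitSet t B :=
  fun _ hF => hF.mono (inter_subset_inter_right _ h)

theorem missSet_anti {A B : Set (ℝ × L)} (h : A ⊆ B) : missSet t B ⊆ missSet t A :=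
  fun _ hF => subset_empty_iff.1 (hF ▸ inter_subset_inter_right _ h)

theorem compl_missSet (A : Set (ℝ × L)) : (missSet t A)ᶜ = hitSet t A := by
  ext F
  simp [hitSet, missSet, nonempty_iff_ne_empty]

theorem isOpen_missSet {K : Set (ℝ × L)} (hK : IsCompact K) : IsOpen (missSet t K) := by
  rw [← missSet_inter_strip]
  exact TopologicalSpace.isOpen_generateFrom_of_mem
    (Or.inr ⟨_, hK.inter_right (isClosed_strip L t), inter_subset_right, rfl⟩)

variable [SecondCountableTopology L] [LocallyCompactSpace L] [T2Space L]

instance (t : ℝ) : SecondCountableTopology (Cl L t) := by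
  open TopologicalSpace in
  obtain ⟨𝒦, h𝒦, hcpt, hbetween⟩ := exists_countable_isCompact_between (ℝ × L)
  refine ⟨⟨(fun b => hitSet t (b ∩ strip L t)) '' countableBasis (ℝ × L) ∪
      (fun K => missSet t (K ∩ strip L t)) '' 𝒦,
    ((countable_countableBasis _).image _).union (h𝒦.image _),
    generateFrom_eq_generateFrom_of_subset ?_ ?_⟩⟩
  · rintro S (⟨b, hb, rfl⟩ | ⟨K, hK, rfl⟩)
    · exact Or.inl ⟨b, isOpen_of_mem_countableBasis hb, rfl⟩
    · exact Or.inr ⟨_, (hcpt K hK).inter_right (isClosed_strip L t), inter_subset_right, rfl⟩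
  · rintro S (⟨U, hU, rfl⟩ | ⟨K, hK, hKs, rfl⟩) F hF
    · obtain ⟨p, hpF, hpU, hps⟩ := hF
      obtain ⟨b, hb, hpb, hbU⟩ := (isBasis_countableBasis _).exists_subset_of_mem_open hpU hU
      exact ⟨_, Or.inl ⟨b, hb, rfl⟩, ⟨p, hpF, hpb, hps⟩,
        hitSet_mono (inter_subset_inter_left _ hbU)⟩
    · obtain ⟨K', hK', hKK', hK'F⟩ := hbetween K _ hK F.2.1.isOpen_compl
        (subset_compl_iff_disjoint_left.2 (disjoint_iff_inter_eq_empty.2 hF))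
      refine ⟨_, Or.inr ⟨K', hK', rfl⟩, ?_, missSet_anti (subset_inter hKK' hKs)⟩
      exact subset_empty_iff.1 fun p ⟨hpF, hpK', _⟩ => hK'F hpK' hpF

theorem measurable_of_fellSubbasis {X : Type*} [MeasurableSpace X] {f : X → Cl L t}
    (hf : ∀ S ∈ fellSubbasis L t, MeasurableSet (f ⁻¹' S)) : Measurable f :=
  (measurable_generateFrom hf).mono le_rfl
    (borel_eq_generateFrom_of_subbasis (fellTop_eq_generateFrom t)).le

theorem measurableSet_hitSet_inter {V C : Set (ℝ × L)} (hV : IsOpen V) (hC : IsClosed C) :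
    MeasurableSet (hitSet t (V ∩ C)) := by
  obtain ⟨𝒦, h𝒦, hcpt, hbetween⟩ := exists_countable_isCompact_between (ℝ × L)
  have hunion : hitSet t (V ∩ C) = ⋃ K ∈ {K ∈ 𝒦 | K ⊆ V}, hitSet t (K ∩ C) := by
    ext F
    simp only [mem_iUnion, exists_prop]
    constructor
    · rintro ⟨p, hpF, hpV, hpC⟩
      obtain ⟨K, hK, hpK, hKV⟩ :=
        hbetween {p} V isCompact_singleton hV (singleton_subset_iff.2 hpV)
      exact ⟨K, ⟨hK, hKV⟩, p, hpF, hpK rfl, hpC⟩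
    · rintro ⟨K, ⟨-, hKV⟩, hF⟩
      exact hitSet_mono (inter_subset_inter_left _ hKV) hF
  rw [hunion]
  refine MeasurableSet.biUnion (h𝒦.mono (sep_subset _ _)) fun K hK => ?_
  rw [← compl_missSet]
  exact (isOpen_missSet ((hcpt K hK.1).inter_right hC)).measurableSet.compl

end FellTopology


section Window

/-- The restriction–translate map `R_{a,a+u}` on `𝒞_w`. -/
def window (a u : ℝ) {w : ℝ} (Z : Cl L w) : Cl L u :=
  ⟨(fun p : ℝ × L => (p.1 + a, p.2)) ⁻¹' Z.1 ∩ strip L u,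
    (Z.2.1.preimage (by fun_prop)).inter (isClosed_strip L u), inter_subset_right⟩

variable {a u w : ℝ}

theorem mem_window {Z : Cl L w} {p : ℝ × L} :
    p ∈ (window a u Z).1 ↔ (p.1 + a, p.2) ∈ Z.1 ∧ p ∈ strip L u := Iff.rfl

theorem restrictTranslate_eq_window (s t : ℝ) :
    (restrictTranslate s t : Cl L 1 → Cl L (t - s)) = window s (t - s) := by
  funext Z
  refine Subtype.ext (ext fun p => ?_)
  simp only [restrictTranslate, image_shift_eq_preimage, mem_preimage, mem_inter_iff, mem_prod,
    mem_Icc, mem_univ, and_true, mem_window, mem_strip]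
  constructor <;> rintro ⟨hp, _, _⟩ <;> exact ⟨hp, by linarith, by linarith⟩

theorem window_zero_self (Z : Cl L u) : window 0 u Z = Z :=
  Subtype.ext (by simpa [window] using Z.2.2)

theorem window_preimage_hitSet (U : Set (ℝ × L)) :
    window a u ⁻¹' hitSet u (U ∩ strip L u) = hitSet w
      ((fun p : ℝ × L => (p.1 - a, p.2)) ⁻¹' U ∩ (fun p => (p.1 - a, p.2)) ⁻¹' strip L u) := by
  ext Z
  constructor
  · rintro ⟨p, ⟨hpZ, -⟩, hpU, hps⟩
    exact ⟨(p.1 + a, p.2), hpZ, by simpa using hpU, by simpa using hps⟩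
  · rintro ⟨q, hqZ, hqU, hqs⟩
    exact ⟨(q.1 - a, q.2), ⟨by simpa using hqZ, hqs⟩, hqU, hqs⟩

theorem window_preimage_missSet {K : Set (ℝ × L)} (hK : K ⊆ strip L u) :
    window a u ⁻¹' missSet u K = missSet w ((fun p : ℝ × L => (p.1 + a, p.2)) '' K) := by
  ext Z
  simp only [mem_preimage, missSet, mem_ofPred_eq, eq_empty_iff_forall_notMem]
  constructor
  · rintro h _ ⟨hqZ, p, hpK, rfl⟩
    exact h p ⟨⟨hqZ, hK hpK⟩, hpK⟩
  · rintro h p ⟨⟨hpZ, -⟩, hpK⟩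
    exact h _ ⟨hpZ, p, hpK, rfl⟩

variable [SecondCountableTopology L] [LocallyCompactSpace L] [T2Space L]

theorem measurable_window (a u w : ℝ) : Measurable (window a u : Cl L w → Cl L u) := by
  refine measurable_of_fellSubbasis ?_
  rintro S (⟨U, hU, rfl⟩ | ⟨K, hK, hKs, rfl⟩)
  · rw [window_preimage_hitSet]
    refine measurableSet_hitSet_inter (hU.preimage ?_) ((isClosed_strip L u).preimage ?_) <;>
      fun_prop
  · rw [window_preimage_missSet hKs]
    exact (isOpen_missSet (hK.image
      (by fun_prop : Continuous fun p : ℝ × L => (p.1 + a, p.2)))).measurableSet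

end Window

section Concat

variable {a b : ℝ}

theorem mem_concat {Z₁ : Cl L a} {Z₂ : Cl L b} {p : ℝ × L} :
    p ∈ (concat a b Z₁ Z₂).1 ↔ (p ∈ Z₁.1 ∨ (p.1 - a, p.2) ∈ Z₂.1) ∧ p ∈ strip L (a + b) := by
  show p ∈ (Z₁.1 ∪ _ '' Z₂.1) ∩ _ ↔ _
  rw [image_eq_preimage_of_inverse (g := fun q : ℝ × L => (q.1 - a, q.2)) (fun q => by simp)
    (fun q => by simp)]
  rfl

theorem window_concat_left (hb : 0 ≤ b) (Z₁ : Cl L a) (Z₂ : Cl L b) (h : ∀ ℓ, (0, ℓ) ∉ Z₂.1) :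
    window 0 a (concat a b Z₁ Z₂) = Z₁ := by
  refine Subtype.ext (ext fun ⟨x, ℓ⟩ => ?_)
  rw [mem_window, mem_concat]
  simp only [add_zero, mem_strip]
  constructor
  · rintro ⟨⟨hZ₁ | hZ₂, -⟩, -, hxa⟩
    · exact hZ₁
    · have hax : 0 ≤ x - a := (mem_strip.1 (Z₂.2.2 hZ₂)).1
      exact absurd (by simpa [le_antisymm hxa (sub_nonneg.1 hax)] using hZ₂) (h ℓ)
  · intro hZ₁
    obtain ⟨hx0, hxa⟩ : 0 ≤ x ∧ x ≤ a := mem_strip.1 (Z₁.2.2 hZ₁)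
    exact ⟨⟨Or.inl hZ₁, hx0, by linarith⟩, hx0, hxa⟩

theorem window_concat_right (ha : 0 ≤ a) (Z₁ : Cl L a) (Z₂ : Cl L b) (h : ∀ ℓ, (a, ℓ) ∉ Z₁.1)
    (u : ℝ) : window a u (concat a b Z₁ Z₂) = window 0 u Z₂ := by
  refine Subtype.ext (ext fun ⟨x, ℓ⟩ => ?_)
  rw [mem_window, mem_window, mem_concat]
  simp only [add_sub_cancel_right, add_zero, mem_strip]
  constructor
  · rintro ⟨⟨hZ₁ | hZ₂, -⟩, hx⟩
    · have hxa : x + a ≤ a := (mem_strip.1 (Z₁.2.2 hZ₁)).2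
      exact absurd (by simpa [le_antisymm (by linarith) hx.1] using hZ₁) (h ℓ)
    · exact ⟨hZ₂, hx⟩
  · rintro ⟨hZ₂, hx⟩
    obtain ⟨hx0, hxb⟩ : 0 ≤ x ∧ x ≤ b := mem_strip.1 (Z₂.2.2 hZ₂)
    exact ⟨⟨Or.inr hZ₂, by linarith, by linarith⟩, hx⟩

end Concat

section Factorizing

variable {μ : (t : ℝ) → Measure (Cl L t)} {a b : ℝ}

theorem ae_forall_notMem_slice (hμ : IsFactorizing μ) {t r : ℝ} (ht : 0 < t)
    (hr : r ∈ Icc 0 t) : ∀ᵐ Z ∂μ t, ∀ ℓ, (r, ℓ) ∉ Z.1 := by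
  rw [ae_iff]
  simpa using hμ.2.2 t ht r hr

theorem map_mutuallyAbsolutelyContinuous_of_comp_concatMap {Y : Type*} [MeasurableSpace Y]
    (hμ : IsFactorizing μ) (ha : 0 < a) (hb : 0 < b) {f : Cl L (a + b) → Y} (hf : Measurable f)
    {g : Cl L a × Cl L b → Y} (hfg : f ∘ concatMap a b =ᵐ[(μ a).prod (μ b)] g) :
    (μ (a + b)).map f ≪ ((μ a).prod (μ b)).map g ∧
      ((μ a).prod (μ b)).map g ≪ (μ (a + b)).map f := by
  have := hμ.1 (a + b) (add_pos ha hb)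
  obtain ⟨hac, hca⟩ := hμ.2.1 a b ha hb
  -- otherwise the pushforward under `concatMap` is `0`, and `μ (a + b) ≪ 0` is impossible
  have hconcat : AEMeasurable (concatMap a b) ((μ a).prod (μ b)) := by
    by_contra h
    rw [Measure.map_of_not_aemeasurable h, Measure.absolutelyContinuous_zero_iff] at hac
    exact IsProbabilityMeasure.ne_zero _ hac
  have hmap : ((μ a).prod (μ b)).map g = (((μ a).prod (μ b)).map (concatMap a b)).map f := by
    rw [AEMeasurable.map_map_of_aemeasurable hf.aemeasurable hconcat, Measure.map_congr hfg]
  rw [hmap]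
  exact ⟨hac.map hf, hca.map hf⟩

variable [SecondCountableTopology L] [LocallyCompactSpace L] [T2Space L]

theorem map_window_concat_left (hμ : IsFactorizing μ) (ha : 0 < a) (hb : 0 < b) :
    (μ (a + b)).map (window 0 a) ≪ μ a ∧ μ a ≪ (μ (a + b)).map (window 0 a) := by
  have := hμ.1 b hb
  have hae : window 0 a ∘ concatMap a b =ᵐ[(μ a).prod (μ b)] Prod.fst := by
    filter_upwards [Measure.quasiMeasurePreserving_snd.ae
      (ae_forall_notMem_slice hμ hb ⟨le_rfl, hb.le⟩)] with p hp
    exact window_concat_left hb.le p.1 p.2 hp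
  simpa using map_mutuallyAbsolutelyContinuous_of_comp_concatMap hμ ha hb
    (measurable_window 0 a _) hae

theorem map_window_concat_right (hμ : IsFactorizing μ) (ha : 0 < a) (hb : 0 < b) (u : ℝ) :
    (μ (a + b)).map (window a u) ≪ (μ b).map (window 0 u) ∧
      (μ b).map (window 0 u) ≪ (μ (a + b)).map (window a u) := by
  have := hμ.1 a ha
  have := hμ.1 b hb
  have hae : window a u ∘ concatMap a b =ᵐ[(μ a).prod (μ b)] window 0 u ∘ Prod.snd := by
    filter_upwards [Measure.quasiMeasurePreserving_fst.ae
      (ae_forall_notMem_slice hμ ha ⟨ha.le, le_rfl⟩)] with p hp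
    exact window_concat_right ha.le p.1 p.2 hp u
  have h := map_mutuallyAbsolutelyContinuous_of_comp_concatMap hμ ha hb
    (measurable_window a u _) hae
  rwa [← Measure.map_map (measurable_window 0 u b) measurable_snd, Measure.map_snd_prod,
    measure_univ, one_smul] at h

theorem map_window_zero (hμ : IsFactorizing μ) {u w : ℝ} (hu : 0 < u) (huw : u ≤ w) :
    (μ w).map (window 0 u) ≪ μ u ∧ μ u ≪ (μ w).map (window 0 u) := by
  rcases huw.eq_or_lt with rfl | huw
  · have hid : (window 0 u : Cl L u → Cl L u) = id := funext window_zero_self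
    simp only [hid, Measure.map_id]
    exact ⟨.rfl, .rfl⟩
  · obtain ⟨b, hb, rfl⟩ : ∃ b, 0 < b ∧ w = u + b := ⟨w - u, by linarith, by ring⟩
    exact map_window_concat_left hμ hu hb

theorem map_window (hμ : IsFactorizing μ) {c u w : ℝ} (hc : 0 ≤ c) (hu : 0 < u)
    (hcuw : c + u ≤ w) : (μ w).map (window c u) ≪ μ u ∧ μ u ≪ (μ w).map (window c u) := by
  rcases hc.eq_or_lt with rfl | hc
  · exact map_window_zero hμ hu (by linarith)
  · obtain ⟨b, hb, rfl⟩ : ∃ b, 0 < b ∧ w = c + b := ⟨w - c, by linarith, by ring⟩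
    obtain ⟨h₁, h₂⟩ := map_window_concat_right hμ hc hb u
    obtain ⟨h₃, h₄⟩ := map_window_zero hμ hu (by linarith : u ≤ b)
    exact ⟨h₁.trans h₃, h₄.trans h₂⟩

end Factorizing

theorem restrictTranslate_pushforward_equiv
    [SecondCountableTopology L] [LocallyCompactSpace L] [T2Space L]
    (μ : (t : ℝ) → Measure (Cl L t)) (hμ : IsFactorizing μ)
    (s t : ℝ) (hs : 0 ≤ s) (hst : s < t) (ht : t ≤ 1) :
    Measure.map (restrictTranslate s t) (μ 1) ≪ μ (t - s) ∧
    μ (t - s) ≪ Measure.map (restrictTranslate s t) (μ 1) := by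
  rw [restrictTranslate_eq_window]
  exact map_window hμ hs (sub_pos.2 hst) (by linarith)


end RandomSets
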